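/- arXiv:0802.2079 — 2 statements merged into one kernel-verified Lean document; each statement's English description precedes it below -/
import Mathlib

section
/- Let k be an algebraically closed field of characteristic zero, let γ*: k[[x_1,…,x_n]] → k[[t]] be a nonzero local k-algebra homomorphism with image A, and suppose the normalization Ã of A inside Frac(A) ⊆ k((t)) equals k[[φ]] for some φ ∈ k[[t]]. Let d be the gcd of the set {ord_t γ*(f) : f ∈ k[[x_1,…,x_n]], 0 < ord_t γ*(f) < ∞}. Then d = ord_t(φ). In particular, the valuation ord_γ = ord_t ∘ γ* is normalized (d = 1) if and only if ord_t(φ) = 1. -/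
/-! If `A ⊆ k[[φ]]` with `ord_t φ = N`, substituting `φ` multiplies orders by `N`, so every
order attained in `A` is a multiple of `N`. Conversely `φ` is a fraction `a₁ / a₂` of elements of
`A`, so `N = ord_t a₁ - ord_t a₂` is an integer combination of attained orders. -/

/-- Substitution of a power series `φ` with zero constant term into a power series `f`:
the image of `f` under the continuous `k`-algebra map `k[[s]] → k[[t]]`, `s ↦ φ`. -/
noncomputable def substPS {k : Type*} [CommRing k] (φ f : PowerSeries k) : PowerSeries k :=
  PowerSeries.mk fun m =>
    ∑ n ∈ Finset.range (m + 1), PowerSeries.coeff (R := k) n f * PowerSeries.coeff (R := k) m (φ ^ n)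

/-- Substitution of power series `g i` (each with zero constant term) for the variables of a
multivariate power series `ψ`: the image of `ψ` under the continuous `k`-algebra map
`k[[x_1,…,x_n]] → k[[t]]`, `x_i ↦ g i`. -/
noncomputable def mvSubst {k : Type*} [CommRing k] {n : ℕ} (g : Fin n → PowerSeries k)
    (ψ : MvPowerSeries (Fin n) k) : PowerSeries k :=
  PowerSeries.mk fun m => PowerSeries.coeff (R := k) m
    (MvPolynomial.aeval g (MvPowerSeries.trunc k (Finsupp.equivFunOnFinite.symm fun _ => m + 1) ψ))

/-- The single-variable power series `P`, viewed as a multivariate power series in the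
first variable `x_1` (index `0`): this is `P(x_1)`. -/
noncomputable def embedX0 {k : Type*} [CommRing k] {n : ℕ} [NeZero n] (P : PowerSeries k) :
    MvPowerSeries (Fin n) k :=
  fun d => if d = Finsupp.single 0 (d 0) then PowerSeries.coeff (R := k) (d 0) P else 0

open PowerSeries

section substPS

variable {k : Type*} [CommRing k]

theorem substPS_zero (φ : PowerSeries k) : substPS φ 0 = 0 := by
  ext m
  simp [substPS]

theorem substPS_X {φ : PowerSeries k} (hφ : constantCoeff φ = 0) : substPS φ X = φ := by
  ext m
  simp only [substPS, coeff_mk, coeff_X]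
  rw [Finset.sum_eq_single 1]
  · simp
  · intro b _ hb
    simp [hb]
  · intro h
    obtain rfl : m = 0 := by simpa using h
    simp [← hφ, ← coeff_zero_eq_constantCoeff]

variable [IsDomain k]

/-- Only the term `f_r φ^r` of `∑ f_b φ^b` reaches degree `N r`; all others start strictly later
or vanish. -/
theorem order_substPS {φ f : PowerSeries k} {N r : ℕ} (hφ : φ.order = N) (hN : 0 < N)
    (hf : f.order = r) : (substPS φ f).order = (N * r : ℕ) := by
  have hpow (b : ℕ) : (φ ^ b).order = (b * N : ℕ) := by
    rw [order_pow, hφ]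
    norm_cast
  obtain ⟨hfr, hf_lt⟩ := order_eq_nat.1 hf
  have hterm {i b : ℕ} (h : b < r ∨ i < b * N) : coeff b f * coeff i (φ ^ b) = 0 := by
    rcases h with h | h
    · rw [hf_lt b h, zero_mul]
    · rw [coeff_of_lt_order i (by rw [hpow]; exact_mod_cast h), mul_zero]
  rw [order_eq_nat]
  refine ⟨?_, fun i hi => ?_⟩
  · rw [substPS, coeff_mk, Finset.sum_eq_single r]
    · rw [mul_comm N]
      exact mul_ne_zero hfr (order_eq_nat.1 (hpow r)).1
    · intro b _ hb
      apply hterm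
      rcases hb.lt_or_gt with h | h
      · exact .inl h
      · exact .inr (by nlinarith)
    · intro h
      exact absurd (Finset.mem_range.2 (by nlinarith)) h
  · rw [substPS, coeff_mk]
    exact Finset.sum_eq_zero fun b _ => hterm (by by_contra! h; nlinarith)

theorem dvd_of_order_substPS_eq {φ f : PowerSeries k} {N m : ℕ} (hφ : φ.order = N)
    (hN : 0 < N) (hm : (substPS φ f).order = m) : N ∣ m := by
  have hf : f ≠ 0 := by
    rintro rfl
    simp [substPS_zero] at hm
  obtain ⟨r, hr⟩ := ENat.ne_top_iff_exists.1 (order_eq_top.not.2 hf)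
  rw [order_substPS hφ hN hr.symm, Nat.cast_inj] at hm
  exact ⟨r, hm.symm⟩

end substPS

/-- The normalization `k[[φ]]` of `A = γ(k[[x]])` enters through `hsub` (`A ⊆ k[[φ]]`) and
`hfrac` (`k[[φ]] ⊆ Frac A`); the conclusion says that `N = ord_t φ` has the defining property of
the gcd of the positive orders attained in `A`. -/
theorem gcd_of_orders_eq_order_of_uniformizer_general
    (k : Type) [Field k] {n : ℕ}
    (γ : MvPowerSeries (Fin n) k →ₐ[k] PowerSeries k)
    (φ : PowerSeries k) (hφc : PowerSeries.constantCoeff (R := k) φ = 0)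
    (hsub : ∀ ψ, ∃ f, substPS φ f = γ ψ)
    (hfrac : ∀ f, ∃ ψ₁ ψ₂, γ ψ₂ ≠ 0 ∧ substPS φ f * γ ψ₂ = γ ψ₁)
    (N : ℕ) (hN : φ.order = N) :
    (∀ (m : ℕ) (ψ : MvPowerSeries (Fin n) k), 0 < m → (γ ψ).order = m → N ∣ m) ∧
      (∀ d : ℕ, (∀ (m : ℕ) (ψ : MvPowerSeries (Fin n) k), 0 < m → (γ ψ).order = m → d ∣ m) →
        d ∣ N) := by
  have hNpos : 0 < N := by
    have h := order_ne_zero_iff_constCoeff_eq_zero.2 hφc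
    rw [hN] at h
    exact_mod_cast pos_iff_ne_zero.2 h
  refine ⟨fun m ψ _ hm => ?_, fun d hd => ?_⟩
  · obtain ⟨f, hf⟩ := hsub ψ
    exact dvd_of_order_substPS_eq hN hNpos (hf ▸ hm)
  · obtain ⟨ψ₁, ψ₂, hψ₂, hφψ⟩ := hfrac X
    rw [substPS_X hφc] at hφψ
    obtain ⟨m, hm⟩ := ENat.ne_top_iff_exists.1 (order_eq_top.not.2 hψ₂)
    have hm₁ : (γ ψ₁).order = (N + m : ℕ) := by
      rw [← hφψ, order_mul, hN, ← hm]
      norm_cast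
    rcases m.eq_zero_or_pos with rfl | hm0
    · simpa using hd N ψ₁ hNpos hm₁
    · exact (Nat.dvd_add_left (hd m ψ₂ hm0 hm.symm)).1 (hd _ ψ₁ (by omega) hm₁)

/-- Let `γ* : k[[x_1,…,x_n]] → k[[t]]` be a nonzero (continuous) local
`k`-algebra homomorphism with image `A`, and suppose the normalization of `A` inside
`Frac(A) ⊆ k((t))` equals `k[[φ]]` (expressed by: `A ⊆ k[[φ]]`, every element of `k[[φ]]` is
integral over `A`, and every element of `k[[φ]]` is a ratio of elements of `A`).  Let `d` be
the gcd of the set `{ord_t γ*(f) : 0 < ord_t γ*(f) < ∞}`.  Then `d = ord_t(φ)`; here this is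
expressed by saying `N = ord_t(φ)` satisfies the defining property of the gcd. -/
theorem gcd_of_orders_eq_order_of_uniformizer
    (k : Type) [Field k] [IsAlgClosed k] [CharZero k] {n : ℕ} [NeZero n]
    (γ : MvPowerSeries (Fin n) k →ₐ[k] PowerSeries k)
    (hlocal : ∀ i, PowerSeries.constantCoeff (R := k) (γ (MvPowerSeries.X i)) = 0)
    (hcont : ∀ ψ, γ ψ = mvSubst (fun i => γ (MvPowerSeries.X i)) ψ)
    (hnz : ∃ i, γ (MvPowerSeries.X i) ≠ 0)
    (φ : PowerSeries k) (hφc : PowerSeries.constantCoeff (R := k) φ = 0)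
    (hsub : ∀ ψ, ∃ f, substPS φ f = γ ψ)
    (hint : ∀ f, IsIntegral γ.range (substPS φ f))
    (hfrac : ∀ f, ∃ ψ₁ ψ₂, γ ψ₂ ≠ 0 ∧ substPS φ f * γ ψ₂ = γ ψ₁)
    (N : ℕ) (hN : φ.order = N)
    (hne : ∃ (m : ℕ) (ψ : MvPowerSeries (Fin n) k), 0 < m ∧ (γ ψ).order = m) :
    (∀ (m : ℕ) (ψ : MvPowerSeries (Fin n) k), 0 < m → (γ ψ).order = m → N ∣ m) ∧
      (∀ d : ℕ, (∀ (m : ℕ) (ψ : MvPowerSeries (Fin n) k), 0 < m → (γ ψ).order = m → d ∣ m) →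
        d ∣ N) :=
  gcd_of_orders_eq_order_of_uniformizer_general k γ φ hφc hsub hfrac N hN
end

section
/- Let k be a field, let v: k[[x_1,…,x_n]] → Z_{≥0} ∪ {∞} be a valuation (satisfying v(c)=0 for c ∈ k*, v(0)=∞, v(fg)=v(f)+v(g), v(f+g) ≥ min(v(f),v(g))), and suppose P_2,…,P_n ∈ t·k[[t]] satisfy v(x_i − P_i(x_1)) = ∞ for 2 ≤ i ≤ n, and v(x_1) = 1. Then for every ψ ∈ k[[x_1,…,x_n]], v(ψ) = ord_t ψ(t, P_2(t), …, P_n(t)). -/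
/-!
Write `ι : k⟦t⟧ → k⟦x⟧` for `t ↦ x_1`. As `k⟦t⟧` is a discrete valuation ring with
uniformizer `t` and `v(x_1) = 1`, `v ∘ ι = ord_t`. The hypotheses then give
`v(x_i) = ord_t P_i ≥ 1` for all `i`, so `v ≥ ord` on `k⟦x⟧`: a series of order `≥ N + 1` is
`∑ x_i g_i` with every `g_i` of order `≥ N`. Finally `ψ - ι(ψ(t, P(t)))` lies in the ideal
`{v = ∞}`: after truncating `ψ` at degree `N`, the polynomial part lies in it because every
`x_i - P_i(x_1)` does, and both remaining errors have order `≥ N`, hence valuation `≥ N`.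
-/

namespace AddValuation

variable {A : Type*} [Ring A]

theorem map_eq_zero_of_isUnit {Γ : Type*} [LinearOrderedAddCommMonoidWithTop Γ]
    [CanonicallyOrderedAdd Γ] (v : AddValuation A Γ) {u : A} (hu : IsUnit u) : v u = 0 := by
  obtain ⟨u, rfl⟩ := hu
  have h : v u + v ↑u⁻¹ = 0 := by rw [← v.map_mul, u.mul_inv, v.map_one]
  exact (add_eq_zero.mp h).1

theorem map_powerSeries_eq_order {k : Type*} [Field k] (v : AddValuation A ℕ∞)
    (φ : PowerSeries k →+* A) (hX : v (φ PowerSeries.X) = 1) (f : PowerSeries k) :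
    v (φ f) = f.order := by
  rcases eq_or_ne f 0 with rfl | hf
  · simp
  have hu : IsUnit (φ f.divXPowOrder) := (PowerSeries.isUnit_iff_constantCoeff.mpr
    (Ne.isUnit (PowerSeries.constantCoeff_divXPowOrder_eq_zero_iff.not.mpr hf))).map φ
  conv_lhs => rw [← PowerSeries.X_pow_order_mul_divXPowOrder (f := f)]
  rw [_root_.map_mul, _root_.map_pow, v.map_mul, v.map_pow, hX, v.map_eq_zero_of_isUnit hu,
    nsmul_one, add_zero, PowerSeries.coe_toNat_order hf]

end AddValuation

theorem MvPolynomial.algHom_sub_mem_of_forall_X_sub_mem {σ R A : Type*} [CommSemiring R]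
    [CommRing A] [Algebra R A] (I : Ideal A) (f g : MvPolynomial σ R →ₐ[R] A)
    (h : ∀ i, f (X i) - g (X i) ∈ I) (p : MvPolynomial σ R) : f p - g p ∈ I := by
  have hfg : (Ideal.Quotient.mkₐ R I).comp f = (Ideal.Quotient.mkₐ R I).comp g :=
    algHom_ext fun i => (Ideal.Quotient.mk_eq_mk_iff_sub_mem _ _).mpr (h i)
  exact (Ideal.Quotient.mk_eq_mk_iff_sub_mem _ _).mp (DFunLike.congr_fun hfg p)

namespace MvPowerSeries

variable {σ R : Type*}

theorem exists_eq_sum_X_mul [Fintype σ] [CommSemiring R] (f : MvPowerSeries σ R)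
    (hf : constantCoeff f = 0) :
    ∃ g : σ → MvPowerSeries σ R, f = ∑ i, X i * g i ∧ ∀ i, f.order - 1 ≤ (g i).order := by
  classical
  let _ : LinearOrder σ := IsWellOrder.linearOrder WellOrderingRel
  -- each monomial of `f` is divided by the smallest variable occurring in it
  let g : σ → MvPowerSeries σ R := fun i d =>
    if (d + Finsupp.single i 1).support.min = (i : WithTop σ) then
      coeff (d + Finsupp.single i 1) f else 0
  have coeff_g (i : σ) (d : σ →₀ ℕ) : coeff d (g i) =
      if (d + Finsupp.single i 1).support.min = (i : WithTop σ) then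
        coeff (d + Finsupp.single i 1) f else 0 :=
    rfl
  refine ⟨g, ?_, fun i => ?_⟩
  · ext e
    have hterm (i : σ) :
        coeff e (X i * g i) = if e.support.min = (i : WithTop σ) then coeff e f else 0 := by
      rw [X_def, coeff_monomial_mul, one_mul]
      split_ifs with hle hmin hmin
      · rw [coeff_g, tsub_add_cancel_of_le hle, if_pos hmin]
      · rw [coeff_g, tsub_add_cancel_of_le hle, if_neg hmin]
      · exact absurd (Finsupp.single_le_iff.mpr
          (Nat.one_le_iff_ne_zero.mpr (Finsupp.mem_support_iff.mp (Finset.mem_of_min hmin))))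
          hle
      · rfl
    rw [map_sum, Finset.sum_congr rfl fun i _ => hterm i]
    rcases eq_or_ne e 0 with rfl | he
    · simp [hf]
    · obtain ⟨i₀, hi₀⟩ := Finset.min_of_nonempty (Finsupp.support_nonempty_iff.mpr he)
      simp [hi₀]
  · refine le_order fun d hd => ?_
    rw [coeff_g]
    split_ifs
    · refine coeff_of_lt_order ?_
      rw [map_add, Finsupp.degree_single, Nat.cast_add, Nat.cast_one]
      exact lt_tsub_iff_right.mp hd
    · rfl

theorem _root_.AddValuation.order_le_of_one_le_map_X [Fintype σ] [CommRing R]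
    (v : AddValuation (MvPowerSeries σ R) ℕ∞) (hX : ∀ i, 1 ≤ v (X i))
    (f : MvPowerSeries σ R) : f.order ≤ v f := by
  suffices h : ∀ N : ℕ, ∀ f : MvPowerSeries σ R, N ≤ f.order → N ≤ v f from
    ENat.forall_natCast_le_iff_le.mp fun N hN => h N f hN
  intro N
  induction N with
  | zero => simp
  | succ N ih =>
    intro f hf
    obtain ⟨g, rfl, hg⟩ := f.exists_eq_sum_X_mul
      (one_le_order_iff_constCoeff_eq_zero.mp (le_trans (by simp) hf))
    refine v.map_le_sum fun i _ => ?_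
    rw [v.map_mul, Nat.cast_succ, add_comm]
    exact add_le_add (hX i)
      (ih _ ((ENat.le_sub_of_add_le_right ENat.one_ne_top hf).trans (hg i)))

theorem coeff_trunc_const_of_degree_lt [Finite σ] [Nonempty σ] [DecidableEq σ] [CommSemiring R]
    {N : ℕ} {d : σ →₀ ℕ} (hd : d.degree < N) (ψ : MvPowerSeries σ R) :
    (trunc R (Finsupp.equivFunOnFinite.symm fun _ => N) ψ).coeff d = coeff d ψ := by
  have hle (i : σ) : d i < N := (Finsupp.le_degree i d).trans_lt hd
  refine (coeff_trunc _ _ _).trans (if_pos ⟨fun i => (hle i).le, fun hge => ?_⟩)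
  exact (hle (Classical.arbitrary σ)).not_ge (hge (Classical.arbitrary σ))

theorem le_order_sub_trunc_const [Finite σ] [Nonempty σ] [DecidableEq σ] [CommRing R]
    (ψ : MvPowerSeries σ R) (N : ℕ) :
    N ≤ (ψ - trunc R (Finsupp.equivFunOnFinite.symm fun _ => N) ψ).order :=
  nat_le_order fun d hd => by
    rw [map_sub, MvPolynomial.coeff_coe, coeff_trunc_const_of_degree_lt hd, sub_self]

end MvPowerSeries

namespace MvPolynomial

variable {σ R : Type*}

theorem le_order_aeval_monomial [CommSemiring R] {P : σ → PowerSeries R}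
    (hP : ∀ i, PowerSeries.constantCoeff (P i) = 0) (d : σ →₀ ℕ) (c : R) :
    (d.degree : ℕ∞) ≤ (aeval P (monomial d c)).order := by
  rw [aeval_monomial, Finsupp.degree_apply, Nat.cast_sum]
  calc ∑ i ∈ d.support, (d i : ℕ∞)
      ≤ ∑ i ∈ d.support, (P i ^ d i).order :=
        Finset.sum_le_sum fun i _ => PowerSeries.le_order_pow_of_constantCoeff_eq_zero _ (hP i)
    _ ≤ (d.prod fun i e => P i ^ e).order := PowerSeries.le_order_prod _ _
    _ ≤ _ := le_add_self.trans (PowerSeries.le_order_mul _ _)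

theorem coeff_aeval_eq_of_coeff_eq [CommRing R] {P : σ → PowerSeries R}
    (hP : ∀ i, PowerSeries.constantCoeff (P i) = 0) {Q Q' : MvPolynomial σ R} {m : ℕ}
    (h : ∀ d : σ →₀ ℕ, d.degree ≤ m → coeff d Q = coeff d Q') :
    PowerSeries.coeff m (aeval P Q) = PowerSeries.coeff m (aeval P Q') := by
  rw [← sub_eq_zero, ← map_sub, ← map_sub, (Q - Q').as_sum, map_sum, map_sum]
  refine Finset.sum_eq_zero fun d hd => PowerSeries.coeff_of_lt_order _ ?_
  have hmd : m < d.degree := by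
    by_contra! hdm
    exact mem_support_iff.mp hd (by rw [coeff_sub, h d hdm, sub_self])
  exact (Nat.cast_lt.mpr hmd).trans_le (le_order_aeval_monomial hP d _)

end MvPolynomial

theorem embedX0_eq_rename {k : Type*} [CommRing k] {n : ℕ} [NeZero n] (f : PowerSeries k) :
    embedX0 f = MvPowerSeries.rename (Function.Embedding.punit (0 : Fin n)) f := by
  ext d
  change (if d = Finsupp.single 0 (d 0) then _ else 0) = _
  split_ifs with hd
  · obtain ⟨m, rfl⟩ : ∃ m, d = Finsupp.single 0 m := ⟨_, hd⟩
    have h := MvPowerSeries.coeff_embDomain_rename (Function.Embedding.punit (0 : Fin n)) f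
      (Finsupp.single () m)
    rw [Finsupp.embDomain_single] at h
    rw [Finsupp.single_eq_same]
    exact h.symm
  · refine (MvPowerSeries.coeff_rename_eq_zero _ _ ?_).symm
    rintro ⟨x, rfl⟩
    obtain ⟨m, rfl⟩ : ∃ m, x = Finsupp.single () m := ⟨x (), Finsupp.unique_single x⟩
    simp [Finsupp.mapDomain_single, Function.Embedding.punit] at hd

theorem MvPowerSeries.rename_punit_X {σ R : Type*} [CommSemiring R] (i : σ) :
    rename (Function.Embedding.punit i) (PowerSeries.X : PowerSeries R) = X i :=
  rename_X _ _

section MvSubst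

open MvPolynomial

variable {k : Type*} {n : ℕ} [NeZero n]

theorem le_order_aeval_trunc_sub_mvSubst [CommRing k] {P : Fin n → PowerSeries k}
    (hP : ∀ i, PowerSeries.constantCoeff (P i) = 0) (ψ : MvPowerSeries (Fin n) k) (N : ℕ) :
    N ≤ (aeval P (MvPowerSeries.trunc k (Finsupp.equivFunOnFinite.symm fun _ => N) ψ)
      - mvSubst P ψ).order := by
  refine PowerSeries.nat_le_order _ _ fun m hm => ?_
  rw [map_sub, mvSubst, PowerSeries.coeff_mk, sub_eq_zero]
  refine coeff_aeval_eq_of_coeff_eq hP fun d hd => ?_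
  rw [MvPowerSeries.coeff_trunc_const_of_degree_lt (hd.trans_lt hm),
    MvPowerSeries.coeff_trunc_const_of_degree_lt (Nat.lt_succ_of_le hd)]

theorem AddValuation.map_eq_order_mvSubst [Field k]
    (v : AddValuation (MvPowerSeries (Fin n) k) ℕ∞) {P : Fin n → PowerSeries k}
    (hP : ∀ i, PowerSeries.constantCoeff (P i) = 0)
    (hsupp : ∀ i, MvPowerSeries.X i - MvPowerSeries.rename (Function.Embedding.punit 0) (P i)
      ∈ v.supp)
    (hX0 : v (MvPowerSeries.X 0) = 1) (ψ : MvPowerSeries (Fin n) k) :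
    v ψ = (mvSubst P ψ).order := by
  set e : PowerSeries k →ₐ[k] MvPowerSeries (Fin n) k :=
    MvPowerSeries.rename (Function.Embedding.punit 0)
  have hve (f : PowerSeries k) : v (e f) = f.order :=
    v.map_powerSeries_eq_order e.toRingHom (by simpa [e, MvPowerSeries.rename_punit_X] using hX0) f
  have hX (i : Fin n) : 1 ≤ v (MvPowerSeries.X i) := by
    rw [← sub_add_cancel (MvPowerSeries.X i) (e (P i)), add_comm, v.map_add_supp _ (hsupp i),
      hve]
    exact PowerSeries.one_le_order_iff_constCoeff_eq_zero.mpr (hP i)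
  have htail : ψ - e (mvSubst P ψ) ∈ v.supp := by
    rw [v.mem_supp_iff, ← top_le_iff, ← ENat.forall_natCast_le_iff_le]
    intro N _
    set Q := MvPowerSeries.trunc k (Finsupp.equivFunOnFinite.symm fun _ => N) ψ
    have hQ : (Q : MvPowerSeries (Fin n) k) - e (aeval P Q) ∈ v.supp :=
      algHom_sub_mem_of_forall_X_sub_mem _ (coeToMvPowerSeries.algHom k) (e.comp (aeval P))
        (fun i => by simpa using hsupp i) Q
    calc (N : ℕ∞)
        ≤ min (v (ψ - Q)) (v (e (aeval P Q - mvSubst P ψ))) :=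
          le_min
            ((MvPowerSeries.le_order_sub_trunc_const ψ N).trans (v.order_le_of_one_le_map_X hX _))
            (by rw [hve]; exact le_order_aeval_trunc_sub_mvSubst hP ψ N)
      _ ≤ v (ψ - Q + e (aeval P Q - mvSubst P ψ)) := v.map_add _ _
      _ = v (ψ - e (mvSubst P ψ)) := by
        rw [← v.map_add_supp _ hQ, _root_.map_sub]
        congr 1
        ring
  calc v ψ = v (e (mvSubst P ψ) + (ψ - e (mvSubst P ψ))) := by rw [add_sub_cancel]
    _ = (mvSubst P ψ).order := by rw [v.map_add_supp _ htail, hve]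

end MvSubst

theorem valuation_eq_order_of_subst_general
    (k : Type) [Field k] {n : ℕ} [NeZero n]
    (v : MvPowerSeries (Fin n) k → ℕ∞)
    (hC : ∀ c : k, c ≠ 0 → v (MvPowerSeries.C (σ := Fin n) (R := k) c) = 0)
    (hzero : v 0 = ⊤)
    (hmul : ∀ x y, v (x * y) = v x + v y)
    (hadd : ∀ x y, min (v x) (v y) ≤ v (x + y))
    (P : Fin n → PowerSeries k) (hP0 : P 0 = PowerSeries.X)
    (hPc : ∀ i, PowerSeries.constantCoeff (R := k) (P i) = 0)
    (hinf : ∀ i : Fin n, i ≠ 0 → v (MvPowerSeries.X i - embedX0 (P i)) = ⊤)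
    (hx1 : v (MvPowerSeries.X 0) = 1) :
    ∀ ψ, v ψ = (mvSubst P ψ).order := by
  let w : AddValuation (MvPowerSeries (Fin n) k) ℕ∞ :=
    AddValuation.of v hzero (by simpa using hC 1 one_ne_zero) hadd hmul
  refine w.map_eq_order_mvSubst hPc (fun i => ?_) hx1
  rcases eq_or_ne i 0 with rfl | hi
  · rw [hP0, MvPowerSeries.rename_punit_X, sub_self]
    exact zero_mem _
  · rw [← embedX0_eq_rename]
    exact hinf i hi

/-- Let `v : k[[x_1,…,x_n]] → ℤ_{≥0} ∪ {∞}` be a valuation, and suppose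
`P_2,…,P_n ∈ t·k[[t]]` satisfy `v(x_i − P_i(x_1)) = ∞` for `2 ≤ i ≤ n` and `v(x_1) = 1`.
Then for every `ψ`, `v(ψ) = ord_t ψ(t, P_2(t), …, P_n(t))`. -/
theorem valuation_eq_order_of_subst
    (k : Type) [Field k] {n : ℕ} [NeZero n]
    (v : MvPowerSeries (Fin n) k → ℕ∞)
    (hC : ∀ c : k, c ≠ 0 → v (MvPowerSeries.C (σ := Fin n) (R := k) c) = 0)
    (hzero : v 0 = ⊤)
    (hmul : ∀ x y, v (x * y) = v x + v y)
    (hadd : ∀ x y, min (v x) (v y) ≤ v (x + y))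
    (hnt : ∃ f, f ≠ 0 ∧ v f ≠ 0)
    (P : Fin n → PowerSeries k) (hP0 : P 0 = PowerSeries.X)
    (hPc : ∀ i, PowerSeries.constantCoeff (R := k) (P i) = 0)
    (hinf : ∀ i : Fin n, i ≠ 0 → v (MvPowerSeries.X i - embedX0 (P i)) = ⊤)
    (hx1 : v (MvPowerSeries.X 0) = 1) :
    ∀ ψ, v ψ = (mvSubst P ψ).order :=
  valuation_eq_order_of_subst_general k v hC hzero hmul hadd P hP0 hPc hinf hx1
end
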